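/- Let R be a commutative ring, M an R-module, n a natural number, and ω : M → M → R an alternating bilinear form on M (i.e. a bilinear form with ω(v,v) = 0 for all v). Regard ω as an alternating 2-form and let ω^{∧n} denote its n-fold wedge power, an alternating 2n-linear form on M, using the shuffle-sum convention for the wedge product of alternating forms (no denominators). Then for all v_1, …, v_{2n} ∈ M one has 2^n · ω^{∧n}(v_1, …, v_{2n}) = Σ_{σ ∈ S_{2n}} sgn(σ) · ∏_{i=1}^{n} ω(v_{σ(2i−1)}, v_{σ(2i)}), where the sum is over all permutations σ of {1, …, 2n}. -/

import Mathlib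

/-- The `n`-fold wedge power of an alternating bilinear form `ω`, as an alternating
`2n`-linear form, using the shuffle-sum convention (no denominators) for the wedge
product of alternating forms: iterating the shuffle wedge product of `ω` with itself
`n` times yields the sum over all permutations `σ` of `{1, …, 2n}` that are increasing
on each consecutive block of two indices. -/
noncomputable def wedgePow {R M : Type*} [CommRing R] [AddCommGroup M] [Module R M]
    (ω : M →ₗ[R] M →ₗ[R] R) (n : ℕ) : (Fin (2 * n) → M) → R := fun v =>
  ∑ σ ∈ Finset.univ.filter (fun σ : Equiv.Perm (Fin (2 * n)) =>
      ∀ i : Fin n, σ ⟨2 * i, by have := i.isLt; omega⟩ < σ ⟨2 * i + 1, by have := i.isLt; omega⟩),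
    (Equiv.Perm.sign σ : ℤ) •
      ∏ i : Fin n,
        ω (v (σ ⟨2 * i, by have := i.isLt; omega⟩))
          (v (σ ⟨2 * i + 1, by have := i.isLt; omega⟩))

/-!
Right multiplication by the block-diagonal copy of `(S₂)ⁿ` (swapping the entries of some of the
pairs `(2i, 2i+1)`) acts freely on `S₂ₙ`, and each orbit contains exactly one permutation that is
increasing on every pair. Since `ω` is alternating, each swap changes the sign of both `sign σ` and
`∏ ω(v_{σ(2i)}, v_{σ(2i+1)})`, so the summand is constant on orbits of size `2ⁿ`.
-/

open Equiv Finset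

theorem Equiv.Perm.fin_two_eq_one_or_eq_swap (t : Perm (Fin 2)) : t = 1 ∨ t = swap 0 1 := by
  decide +revert

theorem LinearMap.BilinForm.IsAlt.apply_perm_fin_two {R M : Type*} [CommRing R] [AddCommGroup M]
    [Module R M] {ω : LinearMap.BilinForm R M} (hω : ω.IsAlt) (x : Fin 2 → M) (t : Perm (Fin 2)) :
    ω (x (t 0)) (x (t 1)) = (Perm.sign t : ℤ) • ω (x 0) (x 1) := by
  rcases t.fin_two_eq_one_or_eq_swap with rfl | rfl
  · simp
  · rw [Perm.sign_swap zero_ne_one, swap_apply_left, swap_apply_right, ← hω.neg_eq]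
    simp

section
variable {ι α : Type*} (e : ι × Fin 2 ≃ α)

def pairFlip (t : ι → Perm (Fin 2)) : Perm α := e.permCongr (prodCongrRight t)

@[simp]
theorem pairFlip_apply (t : ι → Perm (Fin 2)) (i : ι) (j : Fin 2) :
    pairFlip e t (e (i, j)) = e (i, t i j) := by
  simp [pairFlip]

theorem sign_pairFlip [Fintype ι] [DecidableEq ι] [Fintype α] [DecidableEq α]
    (t : ι → Perm (Fin 2)) : Perm.sign (pairFlip e t) = ∏ i, Perm.sign (t i) := by
  rw [pairFlip, Perm.sign_permCongr, Perm.sign_prodCongrRight]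

def pairSorter [LinearOrder α] (σ : Perm α) (i : ι) : Perm (Fin 2) :=
  if σ (e (i, 0)) < σ (e (i, 1)) then 1 else swap 0 1

theorem mul_pairFlip_lt_iff [LinearOrder α] (σ : Perm α) (t : ι → Perm (Fin 2)) (i : ι) :
    (σ * pairFlip e t) (e (i, 0)) < (σ * pairFlip e t) (e (i, 1)) ↔ t i = pairSorter e σ i := by
  have hne : σ (e (i, 1)) ≠ σ (e (i, 0)) := by simp
  have hswap : swap (0 : Fin 2) 1 ≠ 1 := by decide
  simp only [Perm.mul_apply, pairFlip_apply, pairSorter]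
  rcases (t i).fin_two_eq_one_or_eq_swap with h | h <;> rw [h]
  · split_ifs with hlt <;> simp [hlt, hswap.symm]
  · split_ifs with hlt
    · simp [hswap, hlt.le]
    · simpa using lt_of_le_of_ne (not_lt.mp hlt) hne

theorem sum_perm_eq_two_pow_smul_sum_pairIncreasing {R : Type*} [AddCommMonoid R] [Fintype ι]
    [DecidableEq ι] [Fintype α] [DecidableEq α] [LinearOrder α] (f : Perm α → R)
    (hf : ∀ σ t, f (σ * pairFlip e t) = f σ) :
    ∑ σ, f σ = 2 ^ Fintype.card ι •
      ∑ σ ∈ univ.filter (fun σ : Perm α => ∀ i, σ (e (i, 0)) < σ (e (i, 1))), f σ := by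
  set P := fun σ : Perm α => ∀ i, σ (e (i, 0)) < σ (e (i, 1))
  calc ∑ σ, f σ = ∑ σ, ∑ t, if P (σ * pairFlip e t) then f σ else 0 := by
        refine sum_congr rfl fun σ _ => ?_
        simp only [P, mul_pairFlip_lt_iff, ← funext_iff, sum_ite_eq', mem_univ, if_true]
    _ = ∑ t, ∑ σ, if P (σ * pairFlip e t) then f (σ * pairFlip e t) else 0 := by
        rw [sum_comm]; simp only [hf]
    _ = ∑ t : ι → Perm (Fin 2), ∑ σ, if P σ then f σ else 0 :=
        sum_congr rfl fun t _ => Fintype.sum_equiv (Equiv.mulRight (pairFlip e t)) _ _ fun _ => rfl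
    _ = 2 ^ Fintype.card ι • ∑ σ ∈ univ.filter P, f σ := by
        rw [sum_const, card_univ, Fintype.card_fun, Fintype.card_perm, Fintype.card_fin,
          ← sum_filter]
        rfl

theorem sign_smul_prod_mul_pairFlip {R M : Type*} [CommRing R] [AddCommGroup M] [Module R M]
    [Fintype ι] [DecidableEq ι] [Fintype α] [DecidableEq α]
    {ω : LinearMap.BilinForm R M} (hω : ω.IsAlt) (v : α → M) (σ : Perm α) (t : ι → Perm (Fin 2)) :
    (Perm.sign (σ * pairFlip e t) : ℤ) •
        ∏ i, ω (v ((σ * pairFlip e t) (e (i, 0)))) (v ((σ * pairFlip e t) (e (i, 1)))) =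
      (Perm.sign σ : ℤ) • ∏ i, ω (v (σ (e (i, 0)))) (v (σ (e (i, 1)))) := by
  have hprod : ∏ i, ω (v ((σ * pairFlip e t) (e (i, 0)))) (v ((σ * pairFlip e t) (e (i, 1)))) =
      ((∏ i, Perm.sign (t i) : ℤˣ) : ℤ) • ∏ i, ω (v (σ (e (i, 0)))) (v (σ (e (i, 1)))) := by
    simp only [Perm.mul_apply, pairFlip_apply, Units.coe_prod, Int.cast_prod, zsmul_eq_mul,
      ← prod_mul_distrib]
    exact prod_congr rfl fun i _ => by
      simpa [zsmul_eq_mul] using hω.apply_perm_fin_two (fun j => v (σ (e (i, j)))) (t i)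
  rw [hprod, Perm.sign_mul, sign_pairFlip, smul_smul, ← Units.val_mul, mul_assoc,
    Int.units_mul_self, mul_one]
end

def finPairEquiv (n : ℕ) : Fin n × Fin 2 ≃ Fin (2 * n) :=
  finProdFinEquiv.trans (finCongr (Nat.mul_comm n 2))

theorem finPairEquiv_apply {n : ℕ} (i : Fin n) (j : Fin 2) :
    finPairEquiv n (i, j) = ⟨2 * i + j, by omega⟩ :=
  Fin.ext (by simp [finPairEquiv]; ring)

/-- `2^n · ω^{∧n}(v_1, …, v_{2n}) = Σ_{σ ∈ S_{2n}} sgn(σ) ∏_{i=1}^n ω(v_{σ(2i-1)}, v_{σ(2i)})`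
for an alternating bilinear form `ω` on a module `M` over a commutative ring `R`. -/
theorem two_pow_mul_wedgePow_eq_sum_perm {R M : Type*} [CommRing R] [AddCommGroup M]
    [Module R M] (n : ℕ) (ω : M →ₗ[R] M →ₗ[R] R) (hω : ∀ v : M, ω v v = 0)
    (v : Fin (2 * n) → M) :
    (2 : R) ^ n * wedgePow ω n v =
      ∑ σ : Equiv.Perm (Fin (2 * n)),
        (Equiv.Perm.sign σ : ℤ) •
          ∏ i : Fin n,
            ω (v (σ ⟨2 * i, by have := i.isLt; omega⟩))
              (v (σ ⟨2 * i + 1, by have := i.isLt; omega⟩)) := by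
  have hpair (i : Fin n) : (⟨2 * i, by omega⟩ : Fin (2 * n)) = finPairEquiv n (i, 0) ∧
      (⟨2 * i + 1, by omega⟩ : Fin (2 * n)) = finPairEquiv n (i, 1) := by
    simp [finPairEquiv_apply]
  simp only [wedgePow, hpair]
  rw [sum_perm_eq_two_pow_smul_sum_pairIncreasing (finPairEquiv n) _
    (sign_smul_prod_mul_pairFlip (finPairEquiv n) hω v), Fintype.card_fin, nsmul_eq_mul]
  push_cast
  -- the two filters differ only in their decidability instances
  congr
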